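/- Let S = {s_1, …, s_t} be a finite set of integers with t ≥ 3, 1 < s_1 < s_2 < … < s_t, and gcd(s_1, …, s_t) = 1, and let F(S) be the Frobenius number of ⟨S⟩. Then S is greedy if and only if S has no witness k in the interval s_3 + s_1 + 2 ≤ k ≤ F(S) + s_t + s_{t−1}. -/
import Mathlib


open Finset

/-- `a` is a representation of `k` with respect to the denominations `s`:
a vector of nonnegative integers with `∑ i, a i * s i = k`. -/
def IsRep {t : ℕ} (s : Fin t → ℕ) (k : ℕ) (a : Fin t → ℕ) : Prop :=
  ∑ i, a i * s i = k

/-- `k` is representable with respect to `s`. -/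
def Representable {t : ℕ} (s : Fin t → ℕ) (k : ℕ) : Prop :=
  ∃ a, IsRep s k a

/-- `MinCost_S(k)`: the minimum cost `∑ i, a i` over all representations `a` of `k`. -/
noncomputable def minCost {t : ℕ} (s : Fin t → ℕ) (k : ℕ) : ℕ :=
  sInf {c | ∃ a, IsRep s k a ∧ ∑ i, a i = c}

/-- `a` is the greedy representation of `k`: the representation whose reversed vector
`(a_t, …, a_1)` is greatest in lexicographic order among the reversed vectors of all
representations of `k`. -/
def IsGreedyRep {t : ℕ} (s : Fin t → ℕ) (k : ℕ) (a : Fin t → ℕ) : Prop :=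
  IsRep s k a ∧
    ∀ b, IsRep s k b → b = a ∨ ∃ i, b i < a i ∧ ∀ j, i < j → b j = a j

/-- `GreedyCost_S(k)`: the cost of the greedy representation of `k`
(the greedy representation is unique when it exists). -/
noncomputable def greedyCost {t : ℕ} (s : Fin t → ℕ) (k : ℕ) : ℕ :=
  sInf {c | ∃ a, IsGreedyRep s k a ∧ ∑ i, a i = c}

/-- The final remainder `r_0` of the naive greedy algorithm: for `i = t` down to `1`,
replace the current remainder `r` by `r % s_i`. -/
def greedyRem {t : ℕ} (s : Fin t → ℕ) (k : ℕ) : ℕ :=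
  ((List.ofFn s).reverse).foldl (· % ·) k

/-- A counterexample for `S`: a representable `k > 0` with `MinCost_S(k) < GreedyCost_S(k)`. -/
def IsCounterexample {t : ℕ} (s : Fin t → ℕ) (k : ℕ) : Prop :=
  0 < k ∧ Representable s k ∧ minCost s k < greedyCost s k

/-- A witness for `S`: a representable `k > 0` such that for some generator `s i` with
`k - s i` nonnegative and representable, `GreedyCost_S(k) > GreedyCost_S(k - s i) + 1`. -/
def IsWitness {t : ℕ} (s : Fin t → ℕ) (k : ℕ) : Prop :=
  0 < k ∧ Representable s k ∧ ∃ i : Fin t, s i ≤ k ∧ Representable s (k - s i) ∧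
    greedyCost s (k - s i) + 1 < greedyCost s k


namespace GreedyAux

variable {t : ℕ} {s : Fin t → ℕ}

lemma greedy_unique {k : ℕ} {a b : Fin t → ℕ} (ha : IsGreedyRep s k a)
    (hb : IsGreedyRep s k b) : a = b := by
  rcases hb.2 a ha.1 with h | ⟨i, hi, hjs⟩
  · exact h
  rcases ha.2 b hb.1 with h | ⟨i', hi', hjs'⟩
  · exact h.symm
  exfalso
  rcases lt_trichotomy i i' with h | rfl | h
  · exact absurd (hjs i' h) (by omega)
  · omega
  · exact absurd (hjs' i h) (by omega)

lemma greedyCost_eq {k : ℕ} {a : Fin t → ℕ} (ha : IsGreedyRep s k a) :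
    greedyCost s k = ∑ i, a i := by
  have hset : {c | ∃ a', IsGreedyRep s k a' ∧ ∑ i, a' i = c} = {∑ i, a i} := by
    ext c
    constructor
    · rintro ⟨a', ha', rfl⟩
      simp [greedy_unique ha' ha]
    · rintro rfl
      exact ⟨a, ha, rfl⟩
  rw [greedyCost, hset, csInf_singleton]

lemma minCost_le {k : ℕ} {a : Fin t → ℕ} (ha : IsRep s k a) : minCost s k ≤ ∑ i, a i :=
  Nat.sInf_le ⟨a, ha, rfl⟩

lemma exists_minRep {k : ℕ} (h : Representable s k) :
    ∃ a, IsRep s k a ∧ ∑ i, a i = minCost s k := by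
  obtain ⟨a, ha⟩ := h
  exact Nat.sInf_mem (s := {c | ∃ a, IsRep s k a ∧ ∑ i, a i = c}) ⟨∑ i, a i, a, ha, rfl⟩

lemma minCost_le_greedyCost {k : ℕ} {a : Fin t → ℕ} (ha : IsGreedyRep s k a) :
    minCost s k ≤ greedyCost s k := by
  rw [greedyCost_eq ha]; exact minCost_le ha.1

lemma isRep_add {k k' : ℕ} {a b : Fin t → ℕ} (ha : IsRep s k a) (hb : IsRep s k' b) :
    IsRep s (k + k') (a + b) := by
  unfold IsRep at *
  simp only [Pi.add_apply, add_mul, Finset.sum_add_distrib, ha, hb]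

lemma isRep_single (i : Fin t) : IsRep s (s i) (Pi.single i 1) := by
  unfold IsRep
  rw [Finset.sum_eq_single i]
  · simp
  · intro j _ hj; simp [Pi.single_apply, hj]
  · simp

lemma rep_zero_eq (h1 : ∀ i, 1 ≤ s i) {a : Fin t → ℕ} (ha : IsRep s 0 a) : a = 0 := by
  funext i
  by_contra h
  have h2 : 0 < a i * s i := Nat.mul_pos (Nat.pos_of_ne_zero h) (h1 i)
  have h3 : a i * s i ≤ ∑ j, a j * s j :=
    Finset.single_le_sum (f := fun j => a j * s j) (fun j _ => Nat.zero_le _) (Finset.mem_univ i)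
  rw [ha] at h3
  omega

lemma greedy_zero (h1 : ∀ i, 1 ≤ s i) : IsGreedyRep s 0 (0 : Fin t → ℕ) := by
  refine ⟨by simp [IsRep], fun b hb => Or.inl (rep_zero_eq h1 hb)⟩

lemma greedyCost_zero (h1 : ∀ i, 1 ≤ s i) : greedyCost s 0 = 0 := by
  rw [greedyCost_eq (greedy_zero h1)]; simp

lemma minCost_add_le {k k' : ℕ} (h : Representable s k) (h' : Representable s k') :
    minCost s (k + k') ≤ minCost s k + minCost s k' := by
  obtain ⟨a, ha, hac⟩ := exists_minRep h
  obtain ⟨b, hb, hbc⟩ := exists_minRep h'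
  calc minCost s (k + k') ≤ ∑ i, (a + b) i := minCost_le (isRep_add ha hb)
    _ = minCost s k + minCost s k' := by
        simp only [Pi.add_apply, Finset.sum_add_distrib, hac, hbc]

lemma minCost_single_le (i : Fin t) : minCost s (s i) ≤ 1 := by
  have := minCost_le (isRep_single (s := s) i)
  simpa using this

lemma exists_greedyRep : ∀ {t : ℕ} (s : Fin t → ℕ), (∀ i, 1 ≤ s i) → ∀ k : ℕ,
    (∃ a, IsRep s k a) → ∃ a, IsGreedyRep s k a := by
  intro t
  induction t with
  | zero =>
    rintro s _ k ⟨a, ha⟩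
    exact ⟨a, ha, fun b _ => Or.inl (funext fun i => absurd i.2 (by omega))⟩
  | succ n ih =>
    rintro s h1 k ⟨a₀, ha₀⟩
    set C := {c : ℕ | ∃ a, IsRep s k a ∧ a (Fin.last n) = c} with hC
    have hne : C.Nonempty := ⟨a₀ (Fin.last n), a₀, ha₀, rfl⟩
    have hbdd : BddAbove C := by
      refine ⟨k, fun c hc => ?_⟩
      obtain ⟨a, ha, rfl⟩ := hc
      calc a (Fin.last n) ≤ a (Fin.last n) * s (Fin.last n) :=
            Nat.le_mul_of_pos_right _ (h1 _)
        _ ≤ ∑ i, a i * s i :=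
            Finset.single_le_sum (f := fun j => a j * s j)
              (fun j _ => Nat.zero_le _) (Finset.mem_univ _)
        _ = k := ha
    obtain ⟨a₁, ha₁, hlast⟩ := Nat.sSup_mem hne hbdd
    set M := sSup C with hM
    -- split sum
    have hsplit : ∀ b : Fin (n+1) → ℕ,
        (∑ i, b i * s i) =
          (∑ i : Fin n, b i.castSucc * s i.castSucc) + b (Fin.last n) * s (Fin.last n) :=
      fun b => Fin.sum_univ_castSucc _
    have hk' : (∑ i : Fin n, a₁ i.castSucc * s i.castSucc) + M * s (Fin.last n) = k := by
      rw [← hlast, ← hsplit]; exact ha₁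
    set k' := ∑ i : Fin n, a₁ i.castSucc * s i.castSucc with hk'def
    obtain ⟨a', ha'⟩ := ih (fun i => s i.castSucc) (fun i => h1 _) k'
      ⟨fun i => a₁ i.castSucc, rfl⟩
    refine ⟨Fin.snoc a' M, ?_, ?_⟩
    · show (∑ i, _ * s i) = k
      rw [hsplit]
      simp only [Fin.snoc_castSucc, Fin.snoc_last]
      rw [← hk']
      congr 1
      exact ha'.1
    · intro b hb
      have hbM : b (Fin.last n) ≤ M := le_csSup hbdd ⟨b, hb, rfl⟩
      rcases lt_or_eq_of_le hbM with hlt | heq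
      · refine Or.inr ⟨Fin.last n, by simpa using hlt, fun j hj => absurd (Fin.le_last j) (not_le.2 hj)⟩
      · -- b last = M
        have hbrep : IsRep (fun i => s i.castSucc) k' fun i => b i.castSucc := by
          have h2 := hsplit b
          rw [hb, heq] at h2
          show (∑ i : Fin n, b i.castSucc * s i.castSucc) = k'
          omega
        rcases ha'.2 _ hbrep with h | ⟨i, hi, hjs⟩
        · left
          funext j
          induction j using Fin.lastCases with
          | last => simpa [Fin.snoc_last] using heq
          | cast j => simpa [Fin.snoc_castSucc] using congrFun h j
        · refine Or.inr ⟨i.castSucc, by simpa [Fin.snoc_castSucc] using hi, fun j hj => ?_⟩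
          induction j using Fin.lastCases with
          | last => simpa [Fin.snoc_last] using heq
          | cast j =>
            have : i < j := by
              simpa [Fin.castSucc_lt_castSucc_iff] using hj
            simpa [Fin.snoc_castSucc] using hjs j this

-- top digit of greedy rep is positive if some rep has positive top digit
lemma greedy_top_pos {k : ℕ} {a b : Fin t → ℕ} {i₀ : Fin t} (htop : ∀ j, j ≤ i₀)
    (ha : IsGreedyRep s k a) (hb : IsRep s k b) (hbi : 1 ≤ b i₀) : 1 ≤ a i₀ := by
  rcases ha.2 b hb with h | ⟨i, hi, hjs⟩
  · exact h ▸ hbi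
  · rcases eq_or_lt_of_le (htop i) with heq | hlt
    · rw [← heq]; omega
    · have := hjs i₀ hlt
      omega

-- decrement lemma
lemma greedy_decrement {k : ℕ} {a : Fin t → ℕ} {i₀ : Fin t} (htop : ∀ j, j ≤ i₀)
    (ha : IsGreedyRep s (k + s i₀) a) (hai : 1 ≤ a i₀) :
    IsGreedyRep s k (Function.update a i₀ (a i₀ - 1)) := by
  have hsum : ∀ (c : Fin t → ℕ) (v : ℕ), ∑ i, (Function.update c i₀ v) i * s i
      = ∑ i ∈ univ.erase i₀, c i * s i + v * s i₀ := by
    intro c v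
    rw [← Finset.add_sum_erase _ _ (Finset.mem_univ i₀)]
    rw [Function.update_self]
    rw [Finset.sum_congr rfl (fun j hj => by
      rw [Function.update_of_ne (Finset.ne_of_mem_erase hj)])]
    ring
  have hsplit : ∀ c : Fin t → ℕ, ∑ i, c i * s i = ∑ i ∈ univ.erase i₀, c i * s i + c i₀ * s i₀ := by
    intro c
    rw [← Finset.add_sum_erase _ _ (Finset.mem_univ i₀)]
    ring
  constructor
  · show ∑ i, _ * s i = k
    rw [hsum]
    have h2 := hsplit a
    rw [ha.1] at h2
    have : (a i₀ - 1) * s i₀ + s i₀ = a i₀ * s i₀ := by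
      cases' Nat.exists_eq_add_of_le hai with m hm
      rw [hm]
      simp [Nat.add_sub_cancel_left, add_mul, one_mul, Nat.add_comm]
    omega
  · intro b hb
    have hb' : IsRep s (k + s i₀) (Function.update b i₀ (b i₀ + 1)) := by
      show ∑ i, _ * s i = k + s i₀
      rw [hsum]
      have h2 := hsplit b
      rw [hb] at h2
      have : (b i₀ + 1) * s i₀ = b i₀ * s i₀ + s i₀ := by ring
      omega
    rcases ha.2 _ hb' with h | ⟨i, hi, hjs⟩
    · left
      funext j
      by_cases hj : j = i₀
      · subst hj
        have := congrFun h j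
        simp only [Function.update_self] at this ⊢
        omega
      · have := congrFun h j
        simp only [Function.update_of_ne hj] at this ⊢
        exact this
    · by_cases hii : i = i₀
      · subst hii
        refine Or.inr ⟨i, ?_, fun j hj => absurd (htop j) (not_le.2 hj)⟩
        simp only [Function.update_self] at hi ⊢
        omega
      · refine Or.inr ⟨i, ?_, fun j hj => ?_⟩
        · simpa [Function.update_of_ne hii] using hi
        · have := hjs j hj
          by_cases hj0 : j = i₀
          · subst hj0
            simp only [Function.update_self] at this ⊢
            omega
          · simpa [Function.update_of_ne hj0] using this

lemma window_lemma (D L : ℕ) :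
    ∀ (n : ℕ) (m : Fin t → ℕ), ∑ i, m i = n → (∀ i, m i ≠ 0 → s i ≤ D) →
    L < ∑ i, m i * s i →
    ∃ b : Fin t → ℕ, (∀ i, b i ≤ m i) ∧ L < ∑ i, b i * s i ∧ ∑ i, b i * s i ≤ L + D := by
  intro n
  induction n using Nat.strong_induction_on with
  | _ n ih =>
    intro m hn hD hL
    by_cases hbig : ∑ i, m i * s i ≤ L + D
    · exact ⟨m, fun i => le_rfl, hL, hbig⟩
    push_neg at hbig
    -- find i with m i ≠ 0
    have hpos : 0 < ∑ i, m i * s i := by omega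
    have hex : ∃ i, m i ≠ 0 := by
      by_contra h
      push_neg at h
      simp only [h, zero_mul, Finset.sum_const_zero] at hpos
      exact lt_irrefl 0 hpos
    obtain ⟨i, hi⟩ := hex
    set m' := Function.update m i (m i - 1) with hm'
    have hsum' : ∑ j, m' j * s j + s i = ∑ j, m j * s j := by
      rw [← Finset.add_sum_erase _ (fun j => m' j * s j) (Finset.mem_univ i),
          ← Finset.add_sum_erase _ (fun j => m j * s j) (Finset.mem_univ i)]
      have h1 : ∑ j ∈ univ.erase i, m' j * s j = ∑ j ∈ univ.erase i, m j * s j :=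
        Finset.sum_congr rfl fun j hj => by
          rw [hm', Function.update_of_ne (Finset.ne_of_mem_erase hj)]
      rw [h1, hm']
      simp only [Function.update_self]
      have : (m i - 1) * s i + s i = m i * s i := by
        cases' Nat.exists_eq_add_of_le (Nat.one_le_iff_ne_zero.2 hi) with c hc
        rw [hc]
        have : 1 + c - 1 = c := by omega
        rw [this]; ring
      omega
    have hcnt : ∑ j, m' j + 1 = ∑ j, m j := by
      rw [← Finset.add_sum_erase _ m' (Finset.mem_univ i),
          ← Finset.add_sum_erase _ m (Finset.mem_univ i)]
      have h1 : ∑ j ∈ univ.erase i, m' j = ∑ j ∈ univ.erase i, m j :=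
        Finset.sum_congr rfl fun j hj => by
          rw [hm', Function.update_of_ne (Finset.ne_of_mem_erase hj)]
      rw [h1, hm']
      simp only [Function.update_self]
      omega
    have hL' : L < ∑ j, m' j * s j := by
      have := hD i hi
      omega
    obtain ⟨b, hb1, hb2, hb3⟩ := ih (∑ j, m' j) (by omega) m' rfl
      (fun j hj => by
        by_cases hji : j = i
        · subst hji; exact hD j hi
        · apply hD j; rwa [hm', Function.update_of_ne hji] at hj) hL'
    refine ⟨b, fun j => ?_, hb2, hb3⟩
    calc b j ≤ m' j := hb1 j
      _ ≤ m j := by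
        by_cases hji : j = i
        · subst hji; rw [hm', Function.update_self]; omega
        · rw [hm', Function.update_of_ne hji]

lemma coin_exchange {x y x' y' u v : ℕ} (huv : u < v)
    (h : x * u + y * v = x' * u + y' * v) (hy : y' < y) : x + y < x' + y' := by
  zify at *
  nlinarith [mul_le_mul_of_nonneg_left (by omega : (u:ℤ) + 1 ≤ v) (by omega : (0:ℤ) ≤ y - y')]

lemma small_opt (hmono : StrictMono s) {i0 i1 i2 : Fin t}
    (hv0 : (i0:ℕ) = 0) (hv1 : (i1:ℕ) = 1) (hv2 : (i2:ℕ) = 2)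
    (hs0 : 2 ≤ s i0) {k : ℕ} (hk0 : 0 < k) (hk : k ≤ s i2 + s i0 + 1)
    {a m : Fin t → ℕ} (ha : IsGreedyRep s k a) (hm : IsRep s k m) :
    ∑ i, a i ≤ ∑ i, m i := by
  have h01 : i0 < i1 := by rw [Fin.lt_def]; omega
  have h12 : i1 < i2 := by rw [Fin.lt_def]; omega
  have hs01 : s i0 < s i1 := hmono h01
  have hs12 : s i1 < s i2 := hmono h12
  have hs02 : s i0 + 2 ≤ s i2 := by omega
  have hne01 : i0 ≠ i1 := ne_of_lt h01
  set P : Finset (Fin t) := univ.filter (fun j => 2 ≤ (j:ℕ)) with hP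
  have hlow : univ.filter (fun j : Fin t => ¬ 2 ≤ (j:ℕ)) = ({i0, i1} : Finset (Fin t)) := by
    ext j
    simp only [Finset.mem_filter, Finset.mem_univ, true_and, Finset.mem_insert,
      Finset.mem_singleton, not_le]
    constructor
    · intro hj
      rcases (by omega : (j:ℕ) = 0 ∨ (j:ℕ) = 1) with h | h
      · left; exact Fin.ext (by omega)
      · right; exact Fin.ext (by omega)
    · rintro (rfl | rfl) <;> omega
  have hsplit : ∀ (f : Fin t → ℕ), ∑ j, f j = ∑ j ∈ P, f j + (f i0 + f i1) := by
    intro f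
    rw [← Finset.sum_filter_add_sum_filter_not univ (fun j : Fin t => 2 ≤ (j:ℕ)) f, hlow,
      Finset.sum_pair hne01]
  -- F1 : every rep has at most one "big" coin
  have hF1 : ∀ b : Fin t → ℕ, IsRep s k b → ∑ j ∈ P, b j ≤ 1 := by
    intro b hb
    by_contra hcon
    push_neg at hcon
    have h1 : (∑ j ∈ P, b j) * s i2 ≤ ∑ j ∈ P, b j * s j := by
      rw [Finset.sum_mul]
      refine Finset.sum_le_sum fun j hj => ?_
      have : 2 ≤ (j:ℕ) := (Finset.mem_filter.mp hj).2
      exact Nat.mul_le_mul_left _ (hmono.le_iff_le.mpr (by rw [Fin.le_def]; omega))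
    have h2 : ∑ j ∈ P, b j * s j ≤ k := by
      rw [← hb]
      have := hsplit (fun j => b j * s j)
      omega
    have h3 : 2 * s i2 ≤ (∑ j ∈ P, b j) * s i2 := Nat.mul_le_mul_right _ hcon
    omega
  by_cases hA : ∃ j₀ ∈ P, a j₀ ≠ 0
  · -- greedy uses one big coin  
    obtain ⟨j₀, hj₀P, hj₀⟩ := hA
    have hsumP : ∑ j ∈ P, a j = 1 := by
      have h1 := hF1 a ha.1
      have h2 : 1 ≤ ∑ j ∈ P, a j :=
        le_trans (Nat.one_le_iff_ne_zero.2 hj₀) (Finset.single_le_sum (fun j _ => Nat.zero_le _) hj₀P)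
      omega
    have haj₀ : a j₀ = 1 := by
      have h2 : a j₀ ≤ ∑ j ∈ P, a j :=
        Finset.single_le_sum (fun j _ => Nat.zero_le _) hj₀P
      omega
    have hrest : ∀ j ∈ P, j ≠ j₀ → a j = 0 := by
      intro j hj hjne
      have h1 : a j₀ + ∑ x ∈ P.erase j₀, a x = ∑ j ∈ P, a j :=
        Finset.add_sum_erase _ _ hj₀P
      have h2 : a j ≤ ∑ x ∈ P.erase j₀, a x :=
        Finset.single_le_sum (fun x _ => Nat.zero_le _) (Finset.mem_erase.2 ⟨hjne, hj⟩)
      omega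
    have hPval : ∑ j ∈ P, a j * s j = s j₀ := by
      have h1 : a j₀ * s j₀ + ∑ x ∈ P.erase j₀, a x * s x = ∑ j ∈ P, a j * s j :=
        Finset.add_sum_erase _ (fun x => a x * s x) hj₀P
      have h2 : ∑ x ∈ P.erase j₀, a x * s x = 0 := by
        refine Finset.sum_eq_zero fun x hx => ?_
        rw [hrest x (Finset.mem_of_mem_erase hx) (Finset.ne_of_mem_erase hx), zero_mul]
      rw [← h1, h2, haj₀]
      ring
    have hj₀2 : 2 ≤ (j₀:ℕ) := (Finset.mem_filter.mp hj₀P).2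
    have hsj₀ : s i2 ≤ s j₀ := hmono.le_iff_le.mpr (by rw [Fin.le_def]; omega)
    have hval : a i0 * s i0 + a i1 * s i1 + s j₀ = k := by
      have := hsplit (fun j => a j * s j)
      rw [ha.1, hPval] at this  -- careful direction
      omega
    have hsmall : a i0 * s i0 + a i1 * s i1 ≤ s i0 + 1 := by omega
    have hcosta : ∑ i, a i = a i0 + a i1 + 1 := by
      rw [hsplit a, hsumP]; ring
    have hab : a i0 + a i1 ≤ 1 := by
      by_cases h1 : a i1 = 0
      · rw [h1, mul_comm] at hsmall
        simp only [zero_mul, add_zero] at hsmall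
        have : a i0 < 2 := by
          by_contra hcon
          push_neg at hcon
          have := Nat.mul_le_mul_right (s i0) hcon
          omega
        omega
      · have hai1 : 1 ≤ a i1 := Nat.one_le_iff_ne_zero.2 h1
        have h2 : s i1 ≤ a i1 * s i1 := Nat.le_mul_of_pos_left _ hai1
        have h3 : a i1 < 2 := by
          by_contra hcon
          push_neg at hcon
          have := Nat.mul_le_mul_right (s i1) hcon
          omega
        have h4 : a i0 * s i0 = 0 := by omega
        have h5 : a i0 = 0 := by
          rcases Nat.mul_eq_zero.mp h4 with h | h
          · exact h
          · omega
        omega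
    rcases Nat.lt_or_ge (∑ i, m i) 2 with hm2 | hm2
    · -- m has cost 0 or 1
      rcases (by omega : ∑ i, m i = 0 ∨ ∑ i, m i = 1) with hm0 | hm1
      · -- cost 0 : k = 0, contradiction
        exfalso
        have : ∀ j, m j = 0 := by
          intro j
          have := Finset.single_le_sum (f := m) (fun x _ => Nat.zero_le _) (Finset.mem_univ j)
          omega
        have : k = 0 := by
          rw [← hm]
          exact Finset.sum_eq_zero fun j _ => by rw [this j, zero_mul]
        omega
      · -- cost 1 : k = s i⋆
        obtain ⟨iS, hiS⟩ : ∃ iS, m iS ≠ 0 := by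
          by_contra hcon
          push_neg at hcon
          have : ∑ i, m i = 0 := Finset.sum_eq_zero fun j _ => hcon j
          omega
        have hmiS : m iS = 1 := by
          have := Finset.single_le_sum (f := m) (fun x _ => Nat.zero_le _) (Finset.mem_univ iS)
          omega
        have hmrest : ∀ j, j ≠ iS → m j = 0 := by
          intro j hjne
          have h1 : m iS + ∑ x ∈ univ.erase iS, m x = ∑ j, m j :=
            Finset.add_sum_erase _ _ (Finset.mem_univ iS)
          have h2 : m j ≤ ∑ x ∈ univ.erase iS, m x :=
            Finset.single_le_sum (fun x _ => Nat.zero_le _) (Finset.mem_erase.2 ⟨hjne, Finset.mem_univ j⟩)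
          omega
        have hkiS : k = s iS := by
          rw [← hm, Finset.sum_eq_single iS (fun j _ hjne => by rw [hmrest j hjne, zero_mul])
            (fun h => absurd (Finset.mem_univ iS) h), hmiS, one_mul]
        -- show a i0 = a i1 = 0
        by_cases hz : a i0 = 0 ∧ a i1 = 0
        · rw [hcosta, hm1, hz.1, hz.2]
        exfalso
        have hpos : 1 ≤ a i0 * s i0 + a i1 * s i1 := by
          rcases Decidable.not_and_iff_or_not.mp hz with h | h
          · have := Nat.one_le_iff_ne_zero.2 h
            have : s i0 ≤ a i0 * s i0 := Nat.le_mul_of_pos_left _ this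
            omega
          · have := Nat.one_le_iff_ne_zero.2 h
            have : s i1 ≤ a i1 * s i1 := Nat.le_mul_of_pos_left _ this
            omega
        have hj₀iS : s j₀ < s iS := by omega
        have hj₀lt : j₀ < iS := hmono.lt_iff_lt.mp hj₀iS
        have hiS2 : 2 ≤ (iS:ℕ) := by
          have := hj₀lt
          rw [Fin.lt_def] at this
          omega
        have haiS : a iS = 0 := by
          refine hrest iS (Finset.mem_filter.2 ⟨Finset.mem_univ _, hiS2⟩) (ne_of_gt hj₀lt)
        -- apply greediness against the single-coin rep
        have hbrep : IsRep s k (Pi.single iS 1) := by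
          show (∑ i, _) = k
          rw [Finset.sum_eq_single iS (fun j _ hjne => by
              rw [Pi.single_apply, if_neg hjne, zero_mul])
            (fun h => absurd (Finset.mem_univ iS) h)]
          simp [hkiS]
        rcases ha.2 _ hbrep with h | ⟨i, hi, hjs⟩
        · have h1 := congrFun h iS
          rw [Pi.single_eq_same, haiS] at h1
          exact one_ne_zero h1
        · have hine : a i ≠ 0 := by
            have h0 : 0 < a i := lt_of_le_of_lt (Nat.zero_le _) hi
            omega
          have hilt : i < iS := by
            rw [Fin.lt_def]
            by_contra hcon
            push_neg at hcon
            have hi2 : 2 ≤ (i:ℕ) := by omega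
            have hiP : i ∈ P := Finset.mem_filter.2 ⟨Finset.mem_univ _, hi2⟩
            by_cases hij : i = j₀
            · subst hij
              rw [Fin.lt_def] at hj₀lt
              omega
            · exact hine (hrest i hiP hij)
          have h1 := hjs iS hilt
          rw [Pi.single_eq_same, haiS] at h1
          exact one_ne_zero h1
    · rw [hcosta]; omega
  · -- Case B : greedy uses only small coins; then so does every rep
    push_neg at hA
    have hallz : ∀ b : Fin t → ℕ, IsRep s k b → ∀ j ∈ P, b j = 0 := by
      intro b hb j hj
      rcases ha.2 b hb with h | ⟨i, hi, hjs⟩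
      · rw [h]; exact hA j hj
      · have hine : a i ≠ 0 := by omega
        have hiv : (i:ℕ) < 2 := by
          by_contra hcon
          push_neg at hcon
          exact hine (hA i (Finset.mem_filter.2 ⟨Finset.mem_univ _, hcon⟩))
        have : i < j := by
          rw [Fin.lt_def]
          have := (Finset.mem_filter.mp hj).2
          omega
        rw [hjs j this]
        exact hA j hj
    have val_eq : ∀ b : Fin t → ℕ, IsRep s k b → (∀ j ∈ P, b j = 0) →
        b i0 * s i0 + b i1 * s i1 = k ∧ ∑ i, b i = b i0 + b i1 := by
      intro b hb hbz
      have h1 := hsplit (fun j => b j * s j)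
      have h2 : ∑ j ∈ P, b j * s j = 0 := Finset.sum_eq_zero fun j hj => by
        rw [hbz j hj, zero_mul]
      have h3 := hsplit b
      have h4 : ∑ j ∈ P, b j = 0 := Finset.sum_eq_zero hbz
      constructor
      · rw [← hb]; omega
      · omega
    obtain ⟨hvala, hcosta⟩ := val_eq a ha.1 hA
    obtain ⟨hvalm, hcostm⟩ := val_eq m hm (hallz m hm)
    rcases ha.2 m hm with h | ⟨i, hi, hjs⟩
    · rw [h]
    · have hine : a i ≠ 0 := by omega
      have hiv : (i:ℕ) < 2 := by
        by_contra hcon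
        push_neg at hcon
        exact hine (hA i (Finset.mem_filter.2 ⟨Finset.mem_univ _, hcon⟩))
      rcases (by omega : (i:ℕ) = 0 ∨ (i:ℕ) = 1) with h0 | h1
      · -- i = i0 : digits at i1 agree, so reps equal
        have hii0 : i = i0 := Fin.ext (by omega)
        subst hii0
        have he1 : m i1 = a i1 := hjs i1 (by rw [Fin.lt_def]; omega)
        rw [he1] at hvalm
        have he0 : m i * s i = a i * s i := by omega
        have : m i = a i := Nat.eq_of_mul_eq_mul_right (by omega) he0
        rw [hcosta, hcostm, this, he1]
      · -- i = i1 : exchange argument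
        have hii1 : i = i1 := Fin.ext (by omega)
        subst hii1
        rw [hcosta, hcostm]
        have := coin_exchange hs01 (hvala.trans hvalm.symm) hi
        omega

lemma update_sub_val (s : Fin t → ℕ) {m : Fin t → ℕ} {i : Fin t} (hi : 1 ≤ m i) :
    (∑ j, Function.update m i (m i - 1) j * s j) + s i = ∑ j, m j * s j := by
  rw [← Finset.add_sum_erase _ (fun j => Function.update m i (m i - 1) j * s j) (Finset.mem_univ i),
      ← Finset.add_sum_erase _ (fun j => m j * s j) (Finset.mem_univ i)]
  have h1 : ∑ j ∈ univ.erase i, Function.update m i (m i - 1) j * s j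
      = ∑ j ∈ univ.erase i, m j * s j :=
    Finset.sum_congr rfl fun j hj => by
      rw [Function.update_of_ne (Finset.ne_of_mem_erase hj)]
  rw [h1, Function.update_self]
  have : (m i - 1) * s i + s i = m i * s i := by
    cases' Nat.exists_eq_add_of_le hi with c hc
    rw [hc]
    have : 1 + c - 1 = c := by omega
    rw [this]; ring
  omega

lemma update_sub_cost {m : Fin t → ℕ} {i : Fin t} (hi : 1 ≤ m i) :
    (∑ j, Function.update m i (m i - 1) j) + 1 = ∑ j, m j := by
  rw [← Finset.add_sum_erase _ (Function.update m i (m i - 1)) (Finset.mem_univ i),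
      ← Finset.add_sum_erase _ m (Finset.mem_univ i)]
  have h1 : ∑ j ∈ univ.erase i, Function.update m i (m i - 1) j
      = ∑ j ∈ univ.erase i, m j :=
    Finset.sum_congr rfl fun j hj => by
      rw [Function.update_of_ne (Finset.ne_of_mem_erase hj)]
  rw [h1, Function.update_self]
  omega


lemma main_aux {t : ℕ} (ht : 3 ≤ t) (s : Fin t → ℕ) (hmono : StrictMono s)
    {i0 i1 i2 iT iT' : Fin t}
    (hv0 : (i0 : ℕ) = 0) (hv1 : (i1 : ℕ) = 1) (hv2 : (i2 : ℕ) = 2)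
    (hvT : (iT : ℕ) = t - 1) (hvT' : (iT' : ℕ) = t - 2)
    (hone : 1 < s i0)
    (F : ℕ) (hF : ¬ Representable s F) (hF' : ∀ m : ℕ, F < m → Representable s m) :
    (∀ k : ℕ, 0 < k → Representable s k → greedyCost s k = minCost s k) ↔
      ¬ ∃ k : ℕ, s i2 + s i0 + 2 ≤ k ∧
        k ≤ F + s iT + s iT' ∧ IsWitness s k := by
  classical
  have h2s : 2 ≤ s i0 := hone
  have hle0 : ∀ i : Fin t, s i0 ≤ s i := fun i =>
    hmono.le_iff_le.mpr (by rw [Fin.le_def, hv0]; exact Nat.zero_le _)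
  have h1 : ∀ i, 1 ≤ s i := fun i => le_trans (by omega) (hle0 i)
  have htop : ∀ j : Fin t, j ≤ iT := fun j => by
    rw [Fin.le_def, hvT]
    have := j.isLt
    omega
  have hgr : ∀ k, Representable s k → ∃ a, IsGreedyRep s k a :=
    fun k hk => exists_greedyRep s h1 k hk
  have hmle : ∀ {k : ℕ}, Representable s k → minCost s k ≤ greedyCost s k := by
    intro k hk
    obtain ⟨a, ha⟩ := hgr k hk
    exact minCost_le_greedyCost ha
  have hmin0 : minCost s 0 = 0 := by
    have h := minCost_le (s := s) (k := 0) (a := 0) (by simp [IsRep])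
    simpa using h
  have hg0 : greedyCost s 0 = 0 := greedyCost_zero h1
  have hF0 : 1 ≤ F := by
    rcases Nat.eq_zero_or_pos F with rfl | h
    · exact absurd ⟨0, by simp [IsRep]⟩ hF
    · exact h
  constructor
  · -- greedy ⇒ no witness anywhere
    intro hgreedy
    rintro ⟨k, hk1, hk2, hkpos, hkrep, i, hsik, hrep', hineq⟩
    have hEq : ∀ j : ℕ, Representable s j → greedyCost s j = minCost s j := by
      intro j hj
      rcases Nat.eq_zero_or_pos j with rfl | hj0
      · rw [hg0, hmin0]
      · exact hgreedy j hj0 hj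
    have hadd : minCost s k ≤ minCost s (k - s i) + 1 := by
      have h := minCost_add_le hrep' ⟨Pi.single i 1, isRep_single i⟩
      rw [Nat.sub_add_cancel hsik] at h
      have h2 := minCost_single_le (s := s) i
      omega
    rw [hEq _ hkrep, hEq _ hrep'] at hineq
    omega
  · -- no witness in range ⇒ greedy
    intro hnw k hk0 hkrep
    by_contra hne
    have hlt : minCost s k < greedyCost s k := lt_of_le_of_ne (hmle hkrep) (Ne.symm hne)
    set Cx := {j : ℕ | 0 < j ∧ Representable s j ∧ minCost s j < greedyCost s j} with hCx
    have hCne : Cx.Nonempty := ⟨k, hk0, hkrep, hlt⟩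
    set w := sInf Cx with hw
    have hwmem : w ∈ Cx := Nat.sInf_mem hCne
    obtain ⟨hw0, hwrep, hwlt⟩ := hwmem
    have hEq0 : ∀ j, j < w → Representable s j → greedyCost s j = minCost s j := by
      intro j hj hjrep
      rcases Nat.eq_zero_or_pos j with rfl | hj0
      · rw [hg0, hmin0]
      · have hnmem : j ∉ Cx := by
          intro hmem
          have h5 := Nat.sInf_le hmem
          rw [← hw] at h5
          omega
        rw [hCx] at hnmem
        simp only [Set.mem_setOf_eq, not_and] at hnmem
        have h2 := hmle hjrep
        have h3 := hnmem hj0 hjrep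
        omega
    -- minimal counterexample data
    obtain ⟨m, hm, hmc⟩ := exists_minRep hwrep
    have hm' : ∑ j, m j * s j = w := hm
    have hmc1 : 1 ≤ ∑ j, m j := by
      by_contra hcon
      push_neg at hcon
      have hz : ∀ j, m j = 0 := by
        intro j
        have := Finset.single_le_sum (f := m) (fun x _ => Nat.zero_le _) (Finset.mem_univ j)
        omega
      have hw00 : w = 0 := by
        rw [← hm']
        exact Finset.sum_eq_zero fun j _ => by rw [hz j, zero_mul]
      omega
    obtain ⟨iw, hiw⟩ : ∃ i, m i ≠ 0 := by
      by_contra hcon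
      push_neg at hcon
      have : ∑ j, m j = 0 := Finset.sum_eq_zero fun j _ => hcon j
      omega
    have hiw1 : 1 ≤ m iw := Nat.one_le_iff_ne_zero.2 hiw
    have hsiw : s iw ≤ w := by
      have h1' : m iw * s iw ≤ ∑ j, m j * s j :=
        Finset.single_le_sum (f := fun j => m j * s j) (fun x _ => Nat.zero_le _) (Finset.mem_univ iw)
      have h2' : s iw ≤ m iw * s iw := Nat.le_mul_of_pos_left _ hiw1
      omega
    -- w is a witness
    have hrepsub : IsRep s (w - s iw) (Function.update m iw (m iw - 1)) := by
      show (∑ j, Function.update m iw (m iw - 1) j * s j) = w - s iw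
      have h := update_sub_val s hiw1
      omega
    have hcsub : (∑ j, Function.update m iw (m iw - 1) j) + 1 = ∑ j, m j := update_sub_cost hiw1
    have hminsub : minCost s (w - s iw) + 1 ≤ minCost s w := by
      have h := minCost_le hrepsub
      omega
    have hwsublt : w - s iw < w := by
      have := h1 iw
      omega
    have hgsub : greedyCost s (w - s iw) = minCost s (w - s iw) :=
      hEq0 _ hwsublt ⟨_, hrepsub⟩
    have hwit : IsWitness s w := by
      refine ⟨hw0, hwrep, iw, hsiw, ⟨_, hrepsub⟩, ?_⟩
      rw [hgsub]
      omega
    -- lower bound on w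
    have hlow : s i2 + s i0 + 2 ≤ w := by
      by_contra hcon
      push_neg at hcon
      obtain ⟨g, hg⟩ := hgr w hwrep
      have hso := small_opt hmono (i0 := i0) (i1 := i1) (i2 := i2) hv0 hv1 hv2 h2s hw0
        (by omega) hg hm
      rw [greedyCost_eq hg] at hwlt
      omega
    -- upper bound on w
    have hhigh : w ≤ F + s iT + s iT' := by
      by_contra hcon
      push_neg at hcon
      have hTT : s iT' < s iT := hmono (by rw [Fin.lt_def, hvT, hvT']; omega)
      have topRep : ∀ v : ℕ, F + s iT < v → ∃ b, IsRep s v b ∧ 1 ≤ b iT := by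
        intro v hv
        obtain ⟨b', hb'⟩ := hF' (v - s iT) (by omega)
        refine ⟨b' + Pi.single iT 1, ?_, by simp⟩
        have h := isRep_add hb' (isRep_single (s := s) iT)
        rwa [Nat.sub_add_cancel (by omega)] at h
      obtain ⟨g, hg⟩ := hgr w hwrep
      obtain ⟨bg, hbg, hbg1⟩ := topRep w (by omega)
      have hgT : 1 ≤ g iT := greedy_top_pos htop hg hbg hbg1
      -- a min-cost representation of w that uses the top coin
      obtain ⟨m₂, hm₂, hm₂T, hm₂c⟩ : ∃ m₂, IsRep s w m₂ ∧ 1 ≤ m₂ iT ∧ ∑ j, m₂ j ≤ minCost s w := by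
        by_cases hmT : 1 ≤ m iT
        · exact ⟨m, hm, hmT, le_of_eq hmc⟩
        · push_neg at hmT
          have hmT0 : m iT = 0 := by omega
          have hDcoin : ∀ i, m i ≠ 0 → s i ≤ s iT' := by
            intro i hi
            have hiTne : i ≠ iT := fun h => hi (h ▸ hmT0)
            have hival : (i : ℕ) ≤ t - 2 := by
              have h1'' := i.isLt
              have h2'' : (i : ℕ) ≠ t - 1 := by
                intro h
                exact hiTne (Fin.ext (by rw [h, hvT]))
              omega
            exact hmono.le_iff_le.mpr (by rw [Fin.le_def, hvT']; omega)
          obtain ⟨b, hble, hbl, hbu⟩ := window_lemma (s := s) (s iT') (F + s iT)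
            (∑ j, m j) m rfl hDcoin (by omega)
          have hbrep : IsRep s (∑ j, b j * s j) b := rfl
          set v := ∑ j, b j * s j with hv
          have hvw : v < w := by omega
          have hv0 : 0 < v := by
            have := h1 iT
            omega
          obtain ⟨gv, hgv⟩ := hgr v ⟨b, hbrep⟩
          obtain ⟨bv, hbv, hbv1⟩ := topRep v hbl
          have hgvT : 1 ≤ gv iT := greedy_top_pos htop hgv hbv hbv1
          have hsub1 : (v - s iT) + s iT = v := Nat.sub_add_cancel (by omega)
          have hgv' : IsGreedyRep s ((v - s iT) + s iT) gv := by rwa [hsub1]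
          have hdec := greedy_decrement htop hgv' hgvT
          have hgcv : greedyCost s v = greedyCost s (v - s iT) + 1 := by
            rw [greedyCost_eq hgv, greedyCost_eq hdec]
            have h := update_sub_cost (m := gv) (i := iT) hgvT
            omega
          have hvEq : greedyCost s v = minCost s v := hEq0 v hvw ⟨b, hbrep⟩
          have hvsubEq : greedyCost s (v - s iT) = minCost s (v - s iT) :=
            hEq0 _ (by omega) ⟨_, hdec.1⟩
          have hminv : minCost s v ≤ ∑ j, b j := minCost_le hbrep
          obtain ⟨c, hc, hcc⟩ := exists_minRep (⟨_, hdec.1⟩ : Representable s (v - s iT))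
          have hc' : ∑ j, c j * s j = v - s iT := hc
          have hccb : ∑ j, c j + 1 ≤ ∑ j, b j := by omega
          refine ⟨(fun j => (m j - b j) + c j + (Pi.single iT 1 : Fin t → ℕ) j), ?_, ?_, ?_⟩
          · show (∑ j, ((m j - b j) + c j + (Pi.single iT 1 : Fin t → ℕ) j) * s j) = w
            have e1 : ∀ j : Fin t, ((m j - b j) + c j + (Pi.single iT 1 : Fin t → ℕ) j) * s j
                = (m j - b j) * s j + c j * s j + (Pi.single iT 1 : Fin t → ℕ) j * s j := fun j => by ring
            rw [Finset.sum_congr rfl (fun j _ => e1 j), Finset.sum_add_distrib,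
              Finset.sum_add_distrib]
            have e2 : ∑ j, (m j - b j) * s j + ∑ j, b j * s j = ∑ j, m j * s j := by
              rw [← Finset.sum_add_distrib]
              refine Finset.sum_congr rfl fun j _ => ?_
              have h3 := hble j
              have h4 : (m j - b j) + b j = m j := by omega
              rw [← Nat.add_mul, h4]
            have e3 : (∑ j, (Pi.single iT 1 : Fin t → ℕ) j * s j) = s iT := isRep_single iT
            rw [e3, hc']
            omega
          · simp
          · have e1 : ∀ j : Fin t, (m j - b j) + c j + (Pi.single iT 1 : Fin t → ℕ) j
                = ((m j - b j) + c j) + (Pi.single iT 1 : Fin t → ℕ) j := fun j => rfl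
            rw [Finset.sum_congr rfl (fun j _ => e1 j), Finset.sum_add_distrib,
              Finset.sum_add_distrib]
            have e2 : ∑ j, (m j - b j) + ∑ j, b j = ∑ j, m j := by
              rw [← Finset.sum_add_distrib]
              refine Finset.sum_congr rfl fun j _ => ?_
              have h3 := hble j
              omega
            have e3 : (∑ j, (Pi.single iT 1 : Fin t → ℕ) j) = 1 := by
              rw [Finset.sum_eq_single iT (fun j _ hjne => by
                  rw [Pi.single_apply, if_neg hjne])
                (fun h => absurd (Finset.mem_univ iT) h)]
              simp
            rw [e3]
            omega
      -- now decrement both the min rep and the greedy rep of w at the top coin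
      have hm₂' : ∑ j, m₂ j * s j = w := hm₂
      have hm₂sub : IsRep s (w - s iT) (Function.update m₂ iT (m₂ iT - 1)) := by
        show (∑ j, Function.update m₂ iT (m₂ iT - 1) j * s j) = w - s iT
        have h := update_sub_val s hm₂T
        omega
      have hminwsub : minCost s (w - s iT) + 1 ≤ minCost s w := by
        have h1'' := minCost_le hm₂sub
        have h2'' := update_sub_cost hm₂T
        omega
      have hwsEq : greedyCost s (w - s iT) = minCost s (w - s iT) := by
        refine hEq0 _ ?_ ⟨_, hm₂sub⟩
        have := h1 iT
        omega
      have hsubw : (w - s iT) + s iT = w := Nat.sub_add_cancel (by omega)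
      have hg' : IsGreedyRep s ((w - s iT) + s iT) g := by rwa [hsubw]
      have hdecw := greedy_decrement htop hg' hgT
      have hgw : greedyCost s w = greedyCost s (w - s iT) + 1 := by
        rw [greedyCost_eq hg, greedyCost_eq hdecw]
        have h := update_sub_cost (m := g) (i := iT) hgT
        omega
      omega
    exact hnw ⟨w, hlow, hhigh, hwit⟩


end GreedyAux

open GreedyAux in
/-- `S` is greedy if and only if `S` has no witness `k` in the critical range
`s₃ + s₁ + 2 ≤ k ≤ F(S) + s_t + s_{t-1}`. -/
theorem greedy_iff_no_witness_in_critical_range {t : ℕ} (ht : 3 ≤ t)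
    (s : Fin t → ℕ) (hmono : StrictMono s) (hone : 1 < s ⟨0, by omega⟩)
    (hgcd : Finset.univ.gcd s = 1)
    (F : ℕ) (hF : ¬ Representable s F) (hF' : ∀ m : ℕ, F < m → Representable s m) :
    (∀ k : ℕ, 0 < k → Representable s k → greedyCost s k = minCost s k) ↔
      ¬ ∃ k : ℕ, s ⟨2, by omega⟩ + s ⟨0, by omega⟩ + 2 ≤ k ∧
        k ≤ F + s ⟨t - 1, by omega⟩ + s ⟨t - 2, by omega⟩ ∧ IsWitness s k :=
  main_aux ht s hmono (i0 := ⟨0, by omega⟩) (i1 := ⟨1, by omega⟩) (i2 := ⟨2, by omega⟩)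
    (iT := ⟨t - 1, by omega⟩) (iT' := ⟨t - 2, by omega⟩) rfl rfl rfl rfl rfl hone F hF hF'
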